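/- Let 𝒜 be an irreducible finite family of d×d real matrices possessing an invariant cone. Then the maximal invariant cone of 𝒜 equals the dual cone of the minimal invariant cone of the transposed family 𝒜^T: K_max(𝒜) = [K_min(𝒜^T)]^*. -/

import Mathlib

/-!
Dualising, `K ↦ K^*`, sends invariant cones of `𝒜` to invariant cones of `𝒜ᵀ` and reverses
inclusions, so the dual of a minimal invariant cone of `𝒜ᵀ` is a maximal invariant cone of `𝒜`.
Since `𝒜ᵀ` is irreducible too, everything rests on the existence of a minimal invariant cone.

Zorn's lemma gives an inclusion-minimal invariant cone: the intersection of a chain contains a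
common unit vector by compactness, and has interior because it contains the cone spanned by the
orbit of that vector under the semigroup of `𝒜`, which spans `ℝ^d` by irreducibility. An
inclusion-minimal cone is the closed orbit cone of each of its nonzero vectors, so it lies in `K'`
or in `-K'` as soon as it meets `K' ∪ -K'` outside `0`. That two invariant cones `K₁`, `K₂` always
meet in this way is a Krein–Rutman argument: some nonnegative combination `B` of products of the
matrices maps `Kᵢ \ {0}` into `int Kᵢ` for both cones, so it has eigenvectors `vᵢ ∈ int Kᵢ` with
eigenvalues `μᵢ > 0`; if `μ₁ ≤ μ₂` then `±v₂ ∈ K₁`, since otherwise the least `r` with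
`r v₁ - v₂ ∈ K₁` could be lowered by applying `B`.
-/

open Matrix Set

def IsProperCone {d : ℕ} (K : Set (Fin d → ℝ)) : Prop :=
  IsClosed K ∧ Convex ℝ K ∧ (∀ x ∈ K, ∀ t : ℝ, 0 ≤ t → t • x ∈ K) ∧
    K ∩ (-K) = {0} ∧ (interior K).Nonempty

def IsInvariantCone {d m : ℕ} (𝒜 : Fin m → Matrix (Fin d) (Fin d) ℝ)
    (K : Set (Fin d → ℝ)) : Prop :=
  IsProperCone K ∧ ∀ i, ∀ x ∈ K, (𝒜 i).mulVec x ∈ K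

def IsIrreducibleFamily {d m : ℕ} (𝒜 : Fin m → Matrix (Fin d) (Fin d) ℝ) : Prop :=
  ∀ V : Submodule ℝ (Fin d → ℝ), (∀ i, ∀ x ∈ V, (𝒜 i).mulVec x ∈ V) → V = ⊥ ∨ V = ⊤

/-- The dual cone `K^* = {x : (x,y) ≥ 0 for all y ∈ K}`. -/
def dualConeSet {d : ℕ} (K : Set (Fin d → ℝ)) : Set (Fin d → ℝ) :=
  {x | ∀ y ∈ K, 0 ≤ x ⬝ᵥ y}

def IsMinimalInvariantCone {d m : ℕ} (𝒜 : Fin m → Matrix (Fin d) (Fin d) ℝ)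
    (K : Set (Fin d → ℝ)) : Prop :=
  IsInvariantCone 𝒜 K ∧ ∀ K' : Set (Fin d → ℝ), IsInvariantCone 𝒜 K' → K ⊆ K' ∨ K ⊆ -K'

def IsMaximalInvariantCone {d m : ℕ} (𝒜 : Fin m → Matrix (Fin d) (Fin d) ℝ)
    (K : Set (Fin d → ℝ)) : Prop :=
  IsInvariantCone 𝒜 K ∧ ∀ K' : Set (Fin d → ℝ), IsInvariantCone 𝒜 K' → K' ⊆ K ∨ -K' ⊆ K

theorem exists_pos_sub_smul_mem_of_mem_interior {E : Type*} [NormedAddCommGroup E]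
    [NormedSpace ℝ E] {s : Set E} {x : E} (hx : x ∈ interior s) (y : E) :
    ∃ ε > (0 : ℝ), x - ε • y ∈ s := by
  have hlim : Filter.Tendsto (fun t : ℝ => x - t • y) (nhdsWithin 0 (Ioi 0)) (nhds x) :=
    ((continuous_const.sub (continuous_id.smul continuous_const)).tendsto' 0 x (by simp)).mono_left
      nhdsWithin_le_nhds
  obtain ⟨ε, hεs, hε⟩ :=
    ((hlim.eventually (mem_interior_iff_mem_nhds.1 hx)).and self_mem_nhdsWithin).exists
  exact ⟨ε, hε, hεs⟩

theorem Convex.interior_nonempty_of_zero_mem_of_span_eq_top {E : Type*} [NormedAddCommGroup E]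
    [NormedSpace ℝ E] [FiniteDimensional ℝ E] {s : Set E} (hs : Convex ℝ s) (h0 : (0 : E) ∈ s)
    (hspan : Submodule.span ℝ s = ⊤) : (interior s).Nonempty := by
  rw [hs.interior_nonempty_iff_affineSpan_eq_top,
    AffineSubspace.affineSpan_eq_top_iff_vectorSpan_eq_top_of_nonempty ℝ E E ⟨0, h0⟩,
    vectorSpan_eq_span_vsub_set_right ℝ h0]
  simpa using hspan

theorem exists_ne_zero_forall_dotProduct_eq_zero {d : ℕ} {V : Submodule ℝ (Fin d → ℝ)}
    (hV : V ≠ ⊤) : ∃ x ≠ 0, ∀ v ∈ V, x ⬝ᵥ v = 0 := by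
  obtain ⟨f, hf0, hfV⟩ := Submodule.exists_dual_map_eq_bot_of_lt_top hV.lt_top inferInstance
  refine ⟨(dotProductEquiv ℝ (Fin d)).symm f, by simpa using hf0, fun v hv => ?_⟩
  have hfv : f v ∈ V.map f := Submodule.mem_map_of_mem hv
  rw [hfV, Submodule.mem_bot] at hfv
  rw [← hfv, ← dotProductEquiv_apply_apply ℝ, LinearEquiv.apply_symm_apply]

section Cones

open scoped Pointwise

variable {d m : ℕ} {K K' : Set (Fin d → ℝ)}

namespace IsProperCone

theorem isClosed (hK : IsProperCone K) : IsClosed K := hK.1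

theorem convex (hK : IsProperCone K) : Convex ℝ K := hK.2.1

theorem smul_mem (hK : IsProperCone K) {x : Fin d → ℝ} (hx : x ∈ K) {t : ℝ} (ht : 0 ≤ t) :
    t • x ∈ K :=
  hK.2.2.1 x hx t ht

theorem inter_neg (hK : IsProperCone K) : K ∩ -K = {0} := hK.2.2.2.1

theorem interior_nonempty (hK : IsProperCone K) : (interior K).Nonempty := hK.2.2.2.2

theorem zero_mem (hK : IsProperCone K) : (0 : Fin d → ℝ) ∈ K :=
  (hK.inter_neg.symm.subset rfl).1

theorem eq_zero_of_neg_mem (hK : IsProperCone K) {x : Fin d → ℝ} (hx : x ∈ K) (hx' : -x ∈ K) :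
    x = 0 :=
  hK.inter_neg.subset ⟨hx, hx'⟩

theorem add_mem (hK : IsProperCone K) {x y : Fin d → ℝ} (hx : x ∈ K) (hy : y ∈ K) :
    x + y ∈ K := by
  have hmid := hK.convex hx hy (by norm_num : (0 : ℝ) ≤ 1 / 2) (by norm_num : (0 : ℝ) ≤ 1 / 2)
    (by norm_num)
  convert hK.smul_mem hmid zero_le_two using 1
  module

theorem add_mem_interior (hK : IsProperCone K) {x y : Fin d → ℝ} (hx : x ∈ interior K)
    (hy : y ∈ K) : x + y ∈ interior K :=
  interior_mono (by rintro _ ⟨a, ha, b, hb, rfl⟩; exact hK.add_mem ha hb)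
    (subset_interior_add_left (Set.add_mem_add hx hy))

theorem smul_mem_interior (hK : IsProperCone K) {x : Fin d → ℝ} (hx : x ∈ interior K) {c : ℝ}
    (hc : 0 < c) : c • x ∈ interior K := by
  have hcK : c • K ⊆ K := by rintro _ ⟨y, hy, rfl⟩; exact hK.smul_mem hy hc.le
  exact interior_mono hcK ((interior_smul₀ hc.ne' K).symm ▸ Set.smul_mem_smul_set hx)

theorem neg (hK : IsProperCone K) : IsProperCone (-K) := by
  refine ⟨hK.isClosed.neg, hK.convex.neg, fun x hx t ht => ?_, ?_, ?_⟩
  · simpa [Set.mem_neg, smul_neg] using hK.smul_mem hx ht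
  · rw [neg_neg, Set.inter_comm, hK.inter_neg]
  · obtain ⟨x, hx⟩ := hK.interior_nonempty
    exact ⟨-x, interior_maximal (Set.neg_subset_neg.2 interior_subset) isOpen_interior.neg
      (Set.neg_mem_neg.2 hx)⟩

theorem exists_ne_zero [NeZero d] (hK : IsProperCone K) : ∃ y ∈ K, y ≠ 0 := by
  by_contra! h
  have hK0 : K ⊆ {0} := fun y hy => h y hy
  obtain ⟨x, hx⟩ := hK.interior_nonempty
  simpa [interior_singleton] using interior_mono hK0 hx

theorem zero_notMem_interior [NeZero d] (hK : IsProperCone K) :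
    (0 : Fin d → ℝ) ∉ interior K := by
  intro h0
  obtain ⟨y, hy, hy0⟩ := hK.exists_ne_zero
  obtain ⟨ε, hε, hεy⟩ := exists_pos_sub_smul_mem_of_mem_interior h0 y
  rw [zero_sub] at hεy
  exact hy0 (smul_eq_zero.1 (hK.eq_zero_of_neg_mem (hK.smul_mem hy hε.le) hεy) |>.resolve_left
    hε.ne')

theorem inv_norm_smul_mem_inter_sphere (hK : IsProperCone K) {y : Fin d → ℝ} (hy : y ∈ K)
    (hy0 : y ≠ 0) : ‖y‖⁻¹ • y ∈ K ∩ Metric.sphere 0 1 :=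
  ⟨hK.smul_mem hy (inv_nonneg.2 (norm_nonneg y)), by simp [norm_smul, norm_ne_zero_iff.2 hy0]⟩

theorem isCompact_inter_sphere (hK : IsProperCone K) : IsCompact (K ∩ Metric.sphere 0 1) :=
  (isCompact_sphere 0 1).inter_left hK.isClosed

end IsProperCone

theorem inter_neg_eq_singleton_zero_of_subset (hK : K ∩ -K = {0}) (h : K' ⊆ K)
    (h0 : (0 : Fin d → ℝ) ∈ K') : K' ∩ -K' = {0} :=
  Set.Subset.antisymm ((Set.inter_subset_inter h (Set.neg_subset_neg.2 h)).trans hK.subset)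
    (Set.singleton_subset_iff.2 ⟨h0, by simpa using h0⟩)

theorem IsInvariantCone.neg {𝒜 : Fin m → Matrix (Fin d) (Fin d) ℝ}
    (hK : IsInvariantCone 𝒜 K) : IsInvariantCone 𝒜 (-K) :=
  ⟨hK.1.neg, fun i x hx => by simpa [Set.mem_neg, mulVec_neg] using hK.2 i _ hx⟩

end Cones

section Dual

variable {d m : ℕ} {K : Set (Fin d → ℝ)}

theorem subset_dualConeSet_comm {s t : Set (Fin d → ℝ)} :
    s ⊆ dualConeSet t ↔ t ⊆ dualConeSet s :=
  ⟨fun h y hy x hx => dotProduct_comm x y ▸ h hx y hy,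
    fun h x hx y hy => dotProduct_comm y x ▸ h hy x hx⟩

theorem dualConeSet_neg (s : Set (Fin d → ℝ)) : dualConeSet (-s) = -dualConeSet s := by
  ext x
  simp only [dualConeSet, Set.mem_neg, Set.mem_ofPred_eq, neg_dotProduct]
  exact ⟨fun h y hy => by simpa using h (-y) (by simpa using hy),
    fun h y hy => by simpa using h (-y) hy⟩

theorem isClosed_dualConeSet (s : Set (Fin d → ℝ)) : IsClosed (dualConeSet s) := by
  have : dualConeSet s = ⋂ y ∈ s, {x | 0 ≤ x ⬝ᵥ y} := by ext; simp [dualConeSet]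
  rw [this]
  exact isClosed_biInter fun y _ =>
    isClosed_le continuous_const ((dotProductBilin ℝ ℝ).flip y).continuous_of_finiteDimensional

theorem convex_dualConeSet (s : Set (Fin d → ℝ)) : Convex ℝ (dualConeSet s) := by
  intro x hx x' hx' a b ha hb _ y hy
  rw [add_dotProduct, smul_dotProduct, smul_dotProduct]
  exact add_nonneg (mul_nonneg ha (hx y hy)) (mul_nonneg hb (hx' y hy))

theorem smul_mem_dualConeSet {s : Set (Fin d → ℝ)} {x : Fin d → ℝ} (hx : x ∈ dualConeSet s)
    {t : ℝ} (ht : 0 ≤ t) : t • x ∈ dualConeSet s := fun y hy => by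
  rw [smul_dotProduct]
  exact mul_nonneg ht (hx y hy)

theorem zero_mem_dualConeSet (s : Set (Fin d → ℝ)) : (0 : Fin d → ℝ) ∈ dualConeSet s :=
  fun y _ => by rw [zero_dotProduct]

theorem dualConeSet_dualConeSet_subset (hcl : IsClosed K) (hcv : Convex ℝ K)
    (hsm : ∀ x ∈ K, ∀ t : ℝ, 0 ≤ t → t • x ∈ K) (h0 : (0 : Fin d → ℝ) ∈ K) :
    dualConeSet (dualConeSet K) ⊆ K := by
  intro x hx
  by_contra hxK
  obtain ⟨f, u, hfx, hfK⟩ := geometric_hahn_banach_point_closed hcv hcl hxK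
  have hu : u < 0 := by simpa using hfK 0 h0
  have hfpos : ∀ y ∈ K, 0 ≤ f y := by
    intro y hy
    by_contra! hfy
    have := hfK _ (hsm y hy (u / f y) (div_nonneg_of_nonpos hu.le hfy.le))
    rw [map_smul, smul_eq_mul, div_mul_cancel₀ u hfy.ne] at this
    exact this.false
  set w := (dotProductEquiv ℝ (Fin d)).symm f.toLinearMap
  have hw : ∀ y, w ⬝ᵥ y = f y := fun y => by
    rw [← dotProductEquiv_apply_apply ℝ, LinearEquiv.apply_symm_apply]; rfl
  have := hx w fun y hy => (hw y).symm ▸ hfpos y hy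
  rw [dotProduct_comm, hw] at this
  linarith

theorem eq_zero_of_mem_dualConeSet_of_neg_mem (hK : (interior K).Nonempty) {x : Fin d → ℝ}
    (hx : x ∈ dualConeSet K) (hx' : -x ∈ dualConeSet K) : x = 0 := by
  have hKker : K ⊆ LinearMap.ker (dotProductBilin ℝ ℝ x) := fun y hy =>
    le_antisymm (by simpa using hx' y hy) (hx y hy)
  have hker := Submodule.eq_top_of_nonempty_interior' _ (hK.mono (interior_mono hKker))
  simpa using (hker ▸ Submodule.mem_top : x ∈ LinearMap.ker (dotProductBilin ℝ ℝ x))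

theorem dotProduct_pos_of_mem_interior_dualConeSet {w y : Fin d → ℝ}
    (hw : w ∈ interior (dualConeSet K)) (hy : y ∈ K) (hy0 : y ≠ 0) : 0 < w ⬝ᵥ y := by
  obtain ⟨ε, hε, hεw⟩ := exists_pos_sub_smul_mem_of_mem_interior hw y
  have h := hεw y hy
  rw [sub_dotProduct, smul_dotProduct, smul_eq_mul] at h
  have hyy : 0 < y ⬝ᵥ y := by simpa using dotProduct_self_star_pos_iff.2 hy0
  nlinarith

namespace IsProperCone

theorem interior_dualConeSet_nonempty (hK : IsProperCone K) :
    (interior (dualConeSet K)).Nonempty := by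
  refine (convex_dualConeSet K).interior_nonempty_of_zero_mem_of_span_eq_top
    (zero_mem_dualConeSet K) (by_contra fun hspan => ?_)
  obtain ⟨x, hx0, hx⟩ := exists_ne_zero_forall_dotProduct_eq_zero hspan
  have hbidual := dualConeSet_dualConeSet_subset hK.isClosed hK.convex (fun _ hy _ ht =>
    hK.smul_mem hy ht) hK.zero_mem
  have hxK : x ∈ K := hbidual fun w hw => (hx w (Submodule.subset_span hw)).ge
  have hnxK : -x ∈ K := hbidual fun w hw => by
    rw [neg_dotProduct, hx w (Submodule.subset_span hw), neg_zero]
  exact hx0 (hK.eq_zero_of_neg_mem hxK hnxK)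

theorem dualConeSet (hK : IsProperCone K) : IsProperCone (dualConeSet K) :=
  ⟨isClosed_dualConeSet K, convex_dualConeSet K, fun _ hx _ ht => smul_mem_dualConeSet hx ht,
    Set.Subset.antisymm
      (fun _ hx => eq_zero_of_mem_dualConeSet_of_neg_mem hK.interior_nonempty hx.1 hx.2)
      (Set.singleton_subset_iff.2 ⟨zero_mem_dualConeSet K, by simpa using zero_mem_dualConeSet K⟩),
    hK.interior_dualConeSet_nonempty⟩

end IsProperCone

theorem IsInvariantCone.dualConeSet {𝒜 : Fin m → Matrix (Fin d) (Fin d) ℝ}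
    (hK : IsInvariantCone 𝒜 K) : IsInvariantCone (fun i => (𝒜 i)ᵀ) (dualConeSet K) :=
  ⟨hK.1.dualConeSet, fun i x hx y hy => by
    rw [mulVec_transpose, ← dotProduct_mulVec]
    exact hx _ (hK.2 i y hy)⟩

end Dual

section Transpose

variable {d m : ℕ} {𝒜 : Fin m → Matrix (Fin d) (Fin d) ℝ}

theorem IsIrreducibleFamily.transpose (hirr : IsIrreducibleFamily 𝒜) :
    IsIrreducibleFamily (fun i => (𝒜 i)ᵀ) := by
  intro V hV
  let W := V.orthogonalBilin (dotProductBilin ℝ ℝ)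
  have hW : ∀ i, ∀ y ∈ W, 𝒜 i *ᵥ y ∈ W := fun i y hy x hx => by
    simp only [dotProductBilin_apply_apply]
    rw [dotProduct_mulVec, ← mulVec_transpose]
    exact hy _ (hV i x hx)
  rcases hirr W hW with hW | hW
  · refine Or.inr (by_contra fun hV => ?_)
    obtain ⟨x, hx0, hx⟩ := exists_ne_zero_forall_dotProduct_eq_zero hV
    have hxW : x ∈ W := fun v hv => by simpa [dotProduct_comm] using hx v hv
    exact hx0 (by simpa [hW] using hxW)
  · refine Or.inl ((Submodule.eq_bot_iff V).2 fun v hv => ?_)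
    have hvW : v ∈ W := hW ▸ Submodule.mem_top
    simpa using hvW v hv

theorem IsMinimalInvariantCone.isMaximalInvariantCone_dualConeSet {K : Set (Fin d → ℝ)}
    (hK : IsMinimalInvariantCone (fun i => (𝒜 i)ᵀ) K) :
    IsMaximalInvariantCone 𝒜 (dualConeSet K) := by
  refine ⟨by simpa only [transpose_transpose] using hK.1.dualConeSet, fun K' hK' => ?_⟩
  rcases hK.2 _ hK'.dualConeSet with h | h
  · exact Or.inl (subset_dualConeSet_comm.1 h)
  · rw [← dualConeSet_neg] at h
    exact Or.inr (subset_dualConeSet_comm.1 h)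

end Transpose

section Orbit

variable {d m : ℕ} {𝒜 : Fin m → Matrix (Fin d) (Fin d) ℝ} {K : Set (Fin d → ℝ)}

theorem PointedCone.isProperCone {C : PointedCone ℝ (Fin d → ℝ)}
    (hcl : IsClosed (C : Set (Fin d → ℝ))) (hC : (C : Set (Fin d → ℝ)) ∩ -C = {0})
    (hint : (interior (C : Set (Fin d → ℝ))).Nonempty) : IsProperCone (C : Set (Fin d → ℝ)) :=
  ⟨hcl, C.convex, fun _ hx _ ht => C.smul_mem ht hx, hC, hint⟩

def semigroupCone (𝒜 : Fin m → Matrix (Fin d) (Fin d) ℝ) :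
    PointedCone ℝ (Matrix (Fin d) (Fin d) ℝ) :=
  PointedCone.hull ℝ (Submonoid.closure (Set.range 𝒜))

theorem one_mem_semigroupCone : (1 : Matrix (Fin d) (Fin d) ℝ) ∈ semigroupCone 𝒜 :=
  PointedCone.subset_hull (Submonoid.one_mem _)

theorem mul_mem_semigroupCone (i : Fin m) {T : Matrix (Fin d) (Fin d) ℝ}
    (hT : T ∈ semigroupCone 𝒜) : 𝒜 i * T ∈ semigroupCone 𝒜 := by
  induction hT using Submodule.span_induction with
  | mem T hT =>
    exact PointedCone.subset_hull (Submonoid.mul_mem _ (Submonoid.subset_closure ⟨i, rfl⟩) hT)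
  | zero => rw [mul_zero]; exact zero_mem _
  | add S T _ _ hS hT => rw [mul_add]; exact add_mem hS hT
  | smul c T _ hT => rw [mul_smul_comm]; exact Submodule.smul_mem _ c hT

theorem IsInvariantCone.mulVec_mem_of_mem_semigroupCone (hK : IsInvariantCone 𝒜 K)
    {T : Matrix (Fin d) (Fin d) ℝ} (hT : T ∈ semigroupCone 𝒜) {x : Fin d → ℝ} (hx : x ∈ K) :
    T *ᵥ x ∈ K := by
  induction hT using Submodule.span_induction generalizing x with
  | mem T hT =>
    induction hT using Submonoid.closure_induction generalizing x with
    | mem T hT => obtain ⟨i, rfl⟩ := hT; exact hK.2 i x hx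
    | one => rwa [one_mulVec]
    | mul S T _ _ hS hT => rw [← mulVec_mulVec]; exact hS (hT hx)
  | zero => rw [zero_mulVec]; exact hK.1.zero_mem
  | add S T _ _ hS hT => rw [add_mulVec]; exact hK.1.add_mem (hS hx) (hT hx)
  | smul c T _ hT => rw [smul_mulVec, ← Nonneg.coe_smul]; exact hK.1.smul_mem (hT hx) c.2

def orbitCone (𝒜 : Fin m → Matrix (Fin d) (Fin d) ℝ) (u : Fin d → ℝ) :
    PointedCone ℝ (Fin d → ℝ) :=
  (semigroupCone 𝒜).map ((Matrix.toLin' : Matrix (Fin d) (Fin d) ℝ ≃ₗ[ℝ] _).toLinearMap.flip u)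

theorem mem_orbitCone {u x : Fin d → ℝ} :
    x ∈ orbitCone 𝒜 u ↔ ∃ T ∈ semigroupCone 𝒜, T *ᵥ u = x := by
  simp [orbitCone, PointedCone.mem_map]

theorem self_mem_orbitCone (u : Fin d → ℝ) : u ∈ orbitCone 𝒜 u :=
  mem_orbitCone.2 ⟨1, one_mem_semigroupCone, one_mulVec u⟩

theorem mulVec_mem_orbitCone (i : Fin m) {u x : Fin d → ℝ} (hx : x ∈ orbitCone 𝒜 u) :
    𝒜 i *ᵥ x ∈ orbitCone 𝒜 u := by
  obtain ⟨T, hT, rfl⟩ := mem_orbitCone.1 hx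
  exact mem_orbitCone.2 ⟨𝒜 i * T, mul_mem_semigroupCone i hT, (mulVec_mulVec _ _ _).symm⟩

theorem IsInvariantCone.orbitCone_subset (hK : IsInvariantCone 𝒜 K) {u : Fin d → ℝ}
    (hu : u ∈ K) : (orbitCone 𝒜 u : Set (Fin d → ℝ)) ⊆ K := by
  rintro x hx
  obtain ⟨T, hT, rfl⟩ := mem_orbitCone.1 hx
  exact hK.mulVec_mem_of_mem_semigroupCone hT hu

theorem IsInvariantCone.closure_orbitCone_subset (hK : IsInvariantCone 𝒜 K) {u : Fin d → ℝ}
    (hu : u ∈ K) : closure (orbitCone 𝒜 u : Set (Fin d → ℝ)) ⊆ K :=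
  closure_minimal (hK.orbitCone_subset hu) hK.1.isClosed

theorem IsIrreducibleFamily.span_orbitCone (hirr : IsIrreducibleFamily 𝒜) {u : Fin d → ℝ}
    (hu : u ≠ 0) : Submodule.span ℝ (orbitCone 𝒜 u : Set (Fin d → ℝ)) = ⊤ := by
  refine (hirr _ fun i x hx => ?_).resolve_left fun h => hu ?_
  · induction hx using Submodule.span_induction with
    | mem x hx => exact Submodule.subset_span (mulVec_mem_orbitCone i hx)
    | zero => rw [mulVec_zero]; exact zero_mem _
    | add x y _ _ hx hy => rw [mulVec_add]; exact add_mem hx hy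
    | smul c x _ hx => rw [mulVec_smul]; exact Submodule.smul_mem _ c hx
  · simpa [h] using Submodule.subset_span (R := ℝ) (self_mem_orbitCone (𝒜 := 𝒜) u)

theorem IsIrreducibleFamily.interior_orbitCone_nonempty (hirr : IsIrreducibleFamily 𝒜)
    {u : Fin d → ℝ} (hu : u ≠ 0) : (interior (orbitCone 𝒜 u : Set (Fin d → ℝ))).Nonempty :=
  (orbitCone 𝒜 u).convex.interior_nonempty_of_zero_mem_of_span_eq_top (zero_mem _)
    (hirr.span_orbitCone hu)

theorem IsIrreducibleFamily.isInvariantCone_closure_orbitCone (hirr : IsIrreducibleFamily 𝒜)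
    (hK : IsInvariantCone 𝒜 K) {u : Fin d → ℝ} (hu : u ∈ K) (hu0 : u ≠ 0) :
    IsInvariantCone 𝒜 (closure (orbitCone 𝒜 u : Set (Fin d → ℝ))) := by
  have hsub := hK.closure_orbitCone_subset hu
  rw [← PointedCone.coe_closure] at hsub ⊢
  refine ⟨PointedCone.isProperCone isClosed_closure
    (inter_neg_eq_singleton_zero_of_subset hK.1.inter_neg hsub (zero_mem _))
    ((hirr.interior_orbitCone_nonempty hu0).mono (interior_mono subset_closure)),
    fun i x hx => ?_⟩
  rw [PointedCone.coe_closure] at hx ⊢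
  exact Set.MapsTo.closure (fun y hy => mulVec_mem_orbitCone i hy)
    (Continuous.matrix_mulVec continuous_const continuous_id) hx

end Orbit

section StronglyPositive

variable {d m : ℕ} {𝒜 : Fin m → Matrix (Fin d) (Fin d) ℝ} {K : Set (Fin d → ℝ)}
  {B : Matrix (Fin d) (Fin d) ℝ}

def IsStronglyPositive (K : Set (Fin d → ℝ)) (B : Matrix (Fin d) (Fin d) ℝ) : Prop :=
  ∀ y ∈ K, y ≠ 0 → B *ᵥ y ∈ interior K

theorem IsStronglyPositive.add (hB : IsStronglyPositive K B) (hK : IsInvariantCone 𝒜 K)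
    {C : Matrix (Fin d) (Fin d) ℝ} (hC : C ∈ semigroupCone 𝒜) : IsStronglyPositive K (B + C) :=
  fun y hy hy0 => by
    rw [add_mulVec]
    exact hK.1.add_mem_interior (hB y hy hy0) (hK.mulVec_mem_of_mem_semigroupCone hC hy)

theorem IsIrreducibleFamily.exists_mulVec_mem_interior (hirr : IsIrreducibleFamily 𝒜)
    (hK : IsInvariantCone 𝒜 K) {u : Fin d → ℝ} (hu : u ∈ K) (hu0 : u ≠ 0) :
    ∃ T ∈ semigroupCone 𝒜, T *ᵥ u ∈ interior K := by
  obtain ⟨q, hq⟩ := hirr.interior_orbitCone_nonempty hu0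
  obtain ⟨T, hT, rfl⟩ := mem_orbitCone.1 (interior_subset hq)
  exact ⟨T, hT, interior_mono (hK.orbitCone_subset hu) hq⟩

theorem IsIrreducibleFamily.exists_isStronglyPositive (hirr : IsIrreducibleFamily 𝒜)
    (hK : IsInvariantCone 𝒜 K) : ∃ B ∈ semigroupCone 𝒜, IsStronglyPositive K B := by
  have hcover : K ∩ Metric.sphere 0 1 ⊆
      ⋃ T : semigroupCone 𝒜, (fun x => (T : Matrix (Fin d) (Fin d) ℝ) *ᵥ x) ⁻¹' interior K := by
    intro x hx
    obtain ⟨T, hT, hTx⟩ := hirr.exists_mulVec_mem_interior hK hx.1 (by rintro rfl; simp at hx)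
    exact Set.mem_iUnion.2 ⟨⟨T, hT⟩, hTx⟩
  obtain ⟨t, ht⟩ := hK.1.isCompact_inter_sphere.elim_finite_subcover _
    (fun T => isOpen_interior.preimage (Continuous.matrix_mulVec continuous_const continuous_id))
    hcover
  refine ⟨∑ T ∈ t, (T : Matrix (Fin d) (Fin d) ℝ), sum_mem fun T _ => T.2, fun y hy hy0 => ?_⟩
  obtain ⟨T, hTt, hT⟩ := Set.mem_iUnion₂.1 (ht (hK.1.inv_norm_smul_mem_inter_sphere hy hy0))
  have hnorm : 0 < ‖y‖ := norm_pos_iff.2 hy0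
  have hy' : y = ‖y‖ • ‖y‖⁻¹ • y := by rw [smul_smul, mul_inv_cancel₀ hnorm.ne', one_smul]
  rw [← Finset.add_sum_erase t _ hTt, hy', mulVec_smul]
  refine hK.1.smul_mem_interior ?_ hnorm
  rw [add_mulVec]
  exact hK.1.add_mem_interior hT (hK.mulVec_mem_of_mem_semigroupCone (sum_mem fun S _ => S.2)
    (hK.1.smul_mem hy (inv_nonneg.2 hnorm.le)))

end StronglyPositive

section Perron

variable {d : ℕ} {K : Set (Fin d → ℝ)} {B : Matrix (Fin d) (Fin d) ℝ}

theorem IsProperCone.exists_bound_of_mulVec_sub_smul_mem (hK : IsProperCone K)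
    (B : Matrix (Fin d) (Fin d) ℝ) :
    ∃ M : ℝ, ∀ x ∈ K ∩ Metric.sphere 0 1, ∀ t : ℝ, B *ᵥ x - t • x ∈ K → t ≤ M := by
  obtain ⟨w, hw⟩ := hK.interior_dualConeSet_nonempty
  have hpos : ∀ x ∈ K ∩ Metric.sphere 0 1, 0 < w ⬝ᵥ x := fun x hx =>
    dotProduct_pos_of_mem_interior_dualConeSet hw hx.1 (by rintro rfl; simp at hx)
  obtain ⟨M, hM⟩ := hK.isCompact_inter_sphere.bddAbove_image
    (f := fun x => w ⬝ᵥ (B *ᵥ x) / (w ⬝ᵥ x)) (ContinuousOn.div (by fun_prop) (by fun_prop)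
      fun x hx => (hpos x hx).ne')
  refine ⟨M, fun x hx t ht => ?_⟩
  have h := interior_subset hw _ ht
  rw [dotProduct_sub, dotProduct_smul, smul_eq_mul, sub_nonneg] at h
  exact ((le_div_iff₀ (hpos x hx)).2 h).trans (hM ⟨x, hx, rfl⟩)

theorem IsProperCone.exists_eigenvector_mem_interior [NeZero d] (hK : IsProperCone K)
    (hB : IsStronglyPositive K B) : ∃ v ∈ interior K, ∃ μ > (0 : ℝ), B *ᵥ v = μ • v := by
  obtain ⟨M, hM⟩ := hK.exists_bound_of_mulVec_sub_smul_mem B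
  set Γ := (Icc 0 M ×ˢ (K ∩ Metric.sphere 0 1)) ∩
    (fun p : ℝ × (Fin d → ℝ) => B *ᵥ p.2 - p.1 • p.2) ⁻¹' K
  have hΓ : IsCompact Γ := (isCompact_Icc.prod hK.isCompact_inter_sphere).inter_right
    (hK.isClosed.preimage (by fun_prop))
  have hΓmem : ∀ {t x}, 0 ≤ t → x ∈ K ∩ Metric.sphere 0 1 → B *ᵥ x - t • x ∈ K → (t, x) ∈ Γ :=
    fun ht hx htx => ⟨⟨⟨ht, hM _ hx _ htx⟩, hx⟩, htx⟩
  obtain ⟨y, hyK, hy0⟩ := hK.exists_ne_zero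
  have hy := hK.inv_norm_smul_mem_inter_sphere hyK hy0
  -- `μ` is the maximum over unit vectors `x ∈ K` of the largest `t` with `B x - t x ∈ K`.
  obtain ⟨⟨μ, v⟩, ⟨⟨⟨hμ0, -⟩, hv⟩, hvμ⟩, hmax⟩ := hΓ.exists_isMaxOn
    ⟨_, hΓmem le_rfl hy (by simpa using interior_subset (hB _ hy.1 (by rintro h; simp [h] at hy)))⟩
    continuous_fst.continuousOn
  have hv0 : v ≠ 0 := by rintro rfl; simp at hv
  have hBv : B *ᵥ v = μ • v := by
    -- otherwise the unit vector in the direction of `B v` admits a larger `t`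
    by_contra hne
    have hBvint := hB v hv.1 hv0
    have hBv0 : B *ᵥ v ≠ 0 := fun h => hK.zero_notMem_interior (h ▸ hBvint)
    have h1 : B *ᵥ (B *ᵥ v) - μ • B *ᵥ v ∈ interior K := by
      simpa [mulVec_sub, mulVec_smul] using hB _ hvμ (sub_ne_zero.2 hne)
    obtain ⟨ε, hε, hεK⟩ := exists_pos_sub_smul_mem_of_mem_interior h1 (B *ᵥ v)
    have hnext := hK.inv_norm_smul_mem_inter_sphere (interior_subset hBvint) hBv0
    have hmem : B *ᵥ (‖B *ᵥ v‖⁻¹ • B *ᵥ v) - (μ + ε) • (‖B *ᵥ v‖⁻¹ • B *ᵥ v) ∈ K := by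
      convert hK.smul_mem hεK (inv_nonneg.2 (norm_nonneg (B *ᵥ v))) using 1
      rw [mulVec_smul]
      module
    have := isMaxOn_iff.1 hmax _ (hΓmem (by linarith) hnext hmem)
    simp only at this
    linarith
  have hμ : 0 < μ := lt_of_le_of_ne hμ0 fun h =>
    hK.zero_notMem_interior (by simpa [hBv, ← h] using hB v hv.1 hv0)
  refine ⟨v, ?_, μ, hμ, hBv⟩
  simpa [hBv, smul_smul, hμ.ne'] using hK.smul_mem_interior (hB v hv.1 hv0) (inv_pos.2 hμ)

theorem IsProperCone.mem_or_neg_mem_of_mulVec_eq_smul (hK : IsProperCone K)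
    (hB : IsStronglyPositive K B) {u v : Fin d → ℝ} {μ ν : ℝ} (hv : v ∈ interior K)
    (hBv : B *ᵥ v = μ • v) (hBu : B *ᵥ u = ν • u) (hν : 0 < ν) (hμν : μ ≤ ν) :
    u ∈ K ∨ -u ∈ K := by
  by_contra! h
  obtain ⟨hu, hnu⟩ := h
  set T := {r : ℝ | r • v - u ∈ K}
  have hTpos : ∀ r ∈ T, 0 < r := fun r hr => by
    by_contra! hr0
    refine hnu ?_
    convert hK.add_mem hr (hK.smul_mem (interior_subset hv) (neg_nonneg.2 hr0)) using 1
    module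
  have hTne : T.Nonempty := by
    obtain ⟨ε, hε, hεK⟩ := exists_pos_sub_smul_mem_of_mem_interior hv u
    refine ⟨ε⁻¹, show ε⁻¹ • v - u ∈ K from ?_⟩
    convert hK.smul_mem hεK (inv_nonneg.2 hε.le) using 1
    rw [smul_sub, smul_smul, inv_mul_cancel₀ hε.ne', one_smul]
  have hTbdd : BddBelow T := ⟨0, fun r hr => (hTpos r hr).le⟩
  have hrT : sInf T ∈ T := (hK.isClosed.preimage (by fun_prop)).csInf_mem hTne hTbdd
  set r := sInf T
  have hr := hTpos r hrT
  have hw0 : r • v - u ≠ 0 := fun h => hu (by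
    rw [← sub_eq_zero.1 h]; exact hK.smul_mem (interior_subset hv) hr.le)
  have hBw := hB _ hrT hw0
  rw [mulVec_sub, mulVec_smul, hBv, hBu] at hBw
  -- `B` moves `r • v - u` into the interior, so `r` was not the least element of `T`.
  obtain ⟨ε, hε, hεK⟩ := exists_pos_sub_smul_mem_of_mem_interior hBw v
  have hsmaller : (r * μ - ε) / ν ∈ T := show ((r * μ - ε) / ν) • v - u ∈ K by
    convert hK.smul_mem hεK (inv_nonneg.2 hν.le) using 1
    match_scalars <;> field_simp
  have := csInf_le hTbdd hsmaller
  rw [le_div_iff₀ hν] at this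
  nlinarith [mul_le_mul_of_nonneg_left hμν hr.le]

end Perron

section Minimal

variable {d m : ℕ} {𝒜 : Fin m → Matrix (Fin d) (Fin d) ℝ} {K : Set (Fin d → ℝ)}

theorem IsIrreducibleFamily.exists_ne_zero_mem_and_mem_or_mem_neg [NeZero d]
    (hirr : IsIrreducibleFamily 𝒜) {K₁ K₂ : Set (Fin d → ℝ)} (h₁ : IsInvariantCone 𝒜 K₁)
    (h₂ : IsInvariantCone 𝒜 K₂) : ∃ z ≠ 0, z ∈ K₁ ∧ (z ∈ K₂ ∨ z ∈ -K₂) := by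
  obtain ⟨B₁, hB₁, hB₁K⟩ := hirr.exists_isStronglyPositive h₁
  obtain ⟨B₂, hB₂, hB₂K⟩ := hirr.exists_isStronglyPositive h₂
  have hB₁' : IsStronglyPositive K₁ (B₁ + B₂) := hB₁K.add h₁ hB₂
  have hB₂' : IsStronglyPositive K₂ (B₁ + B₂) := add_comm B₂ B₁ ▸ hB₂K.add h₂ hB₁
  obtain ⟨v₁, hv₁, μ₁, hμ₁, hBv₁⟩ := h₁.1.exists_eigenvector_mem_interior hB₁'
  obtain ⟨v₂, hv₂, μ₂, hμ₂, hBv₂⟩ := h₂.1.exists_eigenvector_mem_interior hB₂'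
  have hv₁0 : v₁ ≠ 0 := fun h => h₁.1.zero_notMem_interior (h ▸ hv₁)
  have hv₂0 : v₂ ≠ 0 := fun h => h₂.1.zero_notMem_interior (h ▸ hv₂)
  rcases le_total μ₁ μ₂ with hμ | hμ
  · rcases h₁.1.mem_or_neg_mem_of_mulVec_eq_smul hB₁' hv₁ hBv₁ hBv₂ hμ₂ hμ with h | h
    · exact ⟨v₂, hv₂0, h, Or.inl (interior_subset hv₂)⟩
    · exact ⟨-v₂, neg_ne_zero.2 hv₂0, h, Or.inr (by simpa using interior_subset hv₂)⟩
  · rcases h₂.1.mem_or_neg_mem_of_mulVec_eq_smul hB₂' hv₂ hBv₂ hBv₁ hμ₁ hμ with h | h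
    · exact ⟨v₁, hv₁0, interior_subset hv₁, Or.inl h⟩
    · exact ⟨v₁, hv₁0, interior_subset hv₁, Or.inr h⟩

theorem exists_ne_zero_mem_sInter_of_isChain [NeZero d] {c : Set (Set (Fin d → ℝ))}
    (hc : ∀ K ∈ c, IsProperCone K) (hchain : IsChain (· ⊆ ·) c) (hne : c.Nonempty) :
    ∃ z ≠ 0, z ∈ ⋂₀ c := by
  have : Nonempty ((fun K => K ∩ Metric.sphere 0 1) '' c) := (hne.image _).to_subtype
  obtain ⟨z, hz⟩ := IsCompact.nonempty_sInter_of_directed_nonempty_isCompact_isClosed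
    (S := (fun K => K ∩ Metric.sphere (0 : Fin d → ℝ) 1) '' c)
    (by
      rintro _ ⟨K, hK, rfl⟩ _ ⟨L, hL, rfl⟩
      rcases hchain.total hK hL with h | h
      · exact ⟨_, ⟨K, hK, rfl⟩, subset_rfl, Set.inter_subset_inter_left _ h⟩
      · exact ⟨_, ⟨L, hL, rfl⟩, Set.inter_subset_inter_left _ h, subset_rfl⟩)
    (by
      rintro _ ⟨K, hK, rfl⟩
      obtain ⟨y, hy, hy0⟩ := (hc K hK).exists_ne_zero
      exact ⟨_, (hc K hK).inv_norm_smul_mem_inter_sphere hy hy0⟩)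
    (by rintro _ ⟨K, hK, rfl⟩; exact (hc K hK).isCompact_inter_sphere)
    (by rintro _ ⟨K, hK, rfl⟩; exact (hc K hK).isClosed.inter Metric.isClosed_sphere)
  obtain ⟨K₀, hK₀⟩ := hne
  refine ⟨z, fun h => ?_, fun K hK => (hz _ ⟨K, hK, rfl⟩).1⟩
  simpa [h] using (hz _ ⟨K₀, hK₀, rfl⟩).2

theorem IsIrreducibleFamily.isInvariantCone_sInter [NeZero d] (hirr : IsIrreducibleFamily 𝒜)
    {c : Set (Set (Fin d → ℝ))} (hc : ∀ K ∈ c, IsInvariantCone 𝒜 K)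
    (hchain : IsChain (· ⊆ ·) c) (hne : c.Nonempty) : IsInvariantCone 𝒜 (⋂₀ c) := by
  obtain ⟨z, hz0, hz⟩ := exists_ne_zero_mem_sInter_of_isChain (fun K hK => (hc K hK).1) hchain hne
  obtain ⟨K₀, hK₀⟩ := hne
  refine ⟨⟨isClosed_sInter fun K hK => (hc K hK).1.isClosed,
    convex_sInter fun K hK => (hc K hK).1.convex,
    fun x hx t ht K hK => (hc K hK).1.smul_mem (hx K hK) ht,
    inter_neg_eq_singleton_zero_of_subset (hc K₀ hK₀).1.inter_neg (Set.sInter_subset_of_mem hK₀)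
      fun K hK => (hc K hK).1.zero_mem,
    (hirr.interior_orbitCone_nonempty hz0).mono
      (interior_mono (Set.subset_sInter fun K hK => (hc K hK).orbitCone_subset (hz K hK)))⟩,
    fun i x hx K hK => (hc K hK).2 i x (hx K hK)⟩

theorem IsIrreducibleFamily.exists_isMinimalInvariantCone (hirr : IsIrreducibleFamily 𝒜)
    (hK : IsInvariantCone 𝒜 K) : ∃ Kmin, IsMinimalInvariantCone 𝒜 Kmin := by
  rcases eq_zero_or_neZero d with rfl | _
  · exact ⟨K, hK, fun K' hK' => Or.inl fun x _ => Subsingleton.elim 0 x ▸ hK'.1.zero_mem⟩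
  obtain ⟨Kmin, -, hmin⟩ := zorn_superset_nonempty {K | IsInvariantCone 𝒜 K}
    (fun c hc hchain hne => ⟨⋂₀ c, hirr.isInvariantCone_sInter hc hchain hne,
      fun _ => Set.sInter_subset_of_mem⟩) K hK
  refine ⟨Kmin, hmin.prop, fun K' hK' => ?_⟩
  obtain ⟨z, hz0, hzmin, hzK'⟩ := hirr.exists_ne_zero_mem_and_mem_or_mem_neg hmin.prop hK'
  rw [← hmin.eq_of_subset (hirr.isInvariantCone_closure_orbitCone hmin.prop hzmin hz0)
    (hmin.prop.closure_orbitCone_subset hzmin)]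
  rcases hzK' with h | h
  · exact Or.inl (hK'.closure_orbitCone_subset h)
  · exact Or.inr (hK'.neg.closure_orbitCone_subset h)

end Minimal

theorem max_cone_dual_of_min_cone_transpose_general {d m : ℕ}
    (𝒜 : Fin m → Matrix (Fin d) (Fin d) ℝ)
    (hirr : IsIrreducibleFamily 𝒜)
    (hex : ∃ K : Set (Fin d → ℝ), IsInvariantCone 𝒜 K) :
    ∃ Kmin Kmax : Set (Fin d → ℝ),
      IsMinimalInvariantCone (fun i => (𝒜 i)ᵀ) Kmin ∧
      IsMaximalInvariantCone 𝒜 Kmax ∧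
      Kmax = dualConeSet Kmin := by
  obtain ⟨K, hK⟩ := hex
  obtain ⟨Kmin, hKmin⟩ := hirr.transpose.exists_isMinimalInvariantCone hK.dualConeSet
  exact ⟨Kmin, dualConeSet Kmin, hKmin, hKmin.isMaximalInvariantCone_dualConeSet, rfl⟩

/-- The maximal invariant cone of `𝒜` is the dual of the minimal invariant cone
of the transposed family `𝒜ᵀ`. -/
theorem max_cone_dual_of_min_cone_transpose {d m : ℕ} (hm : 0 < m)
    (𝒜 : Fin m → Matrix (Fin d) (Fin d) ℝ)
    (hirr : IsIrreducibleFamily 𝒜)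
    (hex : ∃ K : Set (Fin d → ℝ), IsInvariantCone 𝒜 K) :
    ∃ Kmin Kmax : Set (Fin d → ℝ),
      IsMinimalInvariantCone (fun i => (𝒜 i)ᵀ) Kmin ∧
      IsMaximalInvariantCone 𝒜 Kmax ∧
      Kmax = dualConeSet Kmin :=
  max_cone_dual_of_min_cone_transpose_general 𝒜 hirr hex
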